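/- Let σ be the sigmoid function and consider ℓ(x) = A·log σ(x) + B·log σ(−x) with A = #(u_i,u_j) > 0 and B = ns·#(u_i)·q(u_i,u_j) > 0. Then the derivative is ℓ'(x) = A·σ(−x) − B·σ(x), and ℓ'(x) = 0 iff x = log(A/B). -/

import Mathlib

noncomputable def sigmoid (x : ℝ) : ℝ := 1 / (1 + Real.exp (-x))

lemma one_add_exp_pos (x : ℝ) : 0 < 1 + Real.exp x := by positivity

lemma log_sigmoid (y : ℝ) : Real.log (sigmoid y) = -Real.log (1 + Real.exp (-y)) := by
  rw [sigmoid, one_div, Real.log_inv]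

lemma hasDerivAt_log_sigmoid (x : ℝ) :
    HasDerivAt (fun y : ℝ => Real.log (sigmoid y)) (sigmoid (-x)) x := by
  have h1 : HasDerivAt (fun y : ℝ => 1 + Real.exp (-y)) (-Real.exp (-x)) x := by
    simpa using ((hasDerivAt_id x).neg.exp.const_add 1)
  have h2 : HasDerivAt (fun y : ℝ => -Real.log (1 + Real.exp (-y)))
      (-(-Real.exp (-x) / (1 + Real.exp (-x)))) x :=
    (h1.log (ne_of_gt (one_add_exp_pos (-x)))).neg
  have heq : (fun y : ℝ => Real.log (sigmoid y)) =
      fun y : ℝ => -Real.log (1 + Real.exp (-y)) := by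
    funext y; exact log_sigmoid y
  rw [heq]
  convert h2 using 1
  rw [sigmoid, neg_neg]
  have h3 : Real.exp x ≠ 0 := Real.exp_ne_zero x
  have h4 : (1 : ℝ) + Real.exp (-x) ≠ 0 := ne_of_gt (one_add_exp_pos (-x))
  field_simp
  rw [Real.exp_neg]
  field_simp
  ring

/-- The derivative of ℓ(x) = A·log σ(x) + B·log σ(−x) is A·σ(−x) − B·σ(x),
and it vanishes iff x = log(A/B). -/
theorem negative_sampling_stationarity (A B : ℝ) (hA : 0 < A) (hB : 0 < B) (x : ℝ) :
    HasDerivAt (fun y : ℝ => A * Real.log (sigmoid y) + B * Real.log (sigmoid (-y)))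
      (A * sigmoid (-x) - B * sigmoid x) x ∧
    (A * sigmoid (-x) - B * sigmoid x = 0 ↔ x = Real.log (A / B)) := by
  constructor
  · have h1 := (hasDerivAt_log_sigmoid x).const_mul A
    have h2 : HasDerivAt (fun y : ℝ => Real.log (sigmoid (-y))) (-sigmoid x) x := by
      have : HasDerivAt (fun y : ℝ => Real.log (sigmoid (-y))) (sigmoid (-(-x)) * -1) x :=
        (hasDerivAt_log_sigmoid (-x)).comp x ((hasDerivAt_id x).neg)
      simpa [neg_neg] using this
    have h3 := h2.const_mul B
    have : HasDerivAt (fun y : ℝ => A * Real.log (sigmoid y) + B * Real.log (sigmoid (-y)))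
        (A * sigmoid (-x) + B * -sigmoid x) x := h1.add h3
    simpa [mul_neg, sub_eq_add_neg] using this
  · have hABpos : 0 < A / B := div_pos hA hB
    have hex : (1 : ℝ) + Real.exp (-x) ≠ 0 := ne_of_gt (one_add_exp_pos (-x))
    have hex' : (1 : ℝ) + Real.exp x ≠ 0 := ne_of_gt (one_add_exp_pos x)
    constructor
    · intro h
      have hx : Real.exp x = A / B := by
        rw [sigmoid, sigmoid, neg_neg] at h
        rw [sub_eq_zero] at h
        field_simp at h
        rw [Real.exp_neg] at h
        have hexz : Real.exp x ≠ 0 := Real.exp_ne_zero x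
        field_simp
        field_simp at h
        nlinarith [Real.exp_pos x]
      rw [← hx, Real.log_exp]
    · intro h
      subst h
      rw [sigmoid, sigmoid, neg_neg, Real.exp_log hABpos, sub_eq_zero, Real.exp_neg,
        Real.exp_log hABpos]
      field_simp
      ring
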